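/- arXiv:1112.6017 — 3 statements merged into one kernel-verified Lean document; each statement's English description precedes it below -/
import Mathlib

section
/- Let (X,d) be a compact connected metric space with more than one point and finite one-dimensional Hausdorff measure, such that every connected subset has Hausdorff 1-measure at least its diameter, and let f : X → X be Lipschitz with constant L ≥ 1. Then the topological entropy of f satisfies h(f) ≤ log L. -/
/-!
Along an orbit segment of length `n` a Lipschitz map stretches distances by at most `Lⁿ`, so the
points of an `(ε, n)`-dynamical net are `ε / Lⁿ`-separated. In a compact connected space every ball
`B(x, r)` with `r` at most half the diameter has 1-dimensional Hausdorff measure at least `r`,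
because the distance to `x` maps it onto `[0, r)`. Packing disjoint balls, a `δ`-separated set has
at most `2 μH¹(X) / δ` points, so maximal nets grow like `Lⁿ` and the entropy is at most `log L`.
-/

open MeasureTheory
open scoped NNReal ENNReal

open Set Metric

section Packing

variable {X : Type*}

lemma exists_diam_univ_le_two_mul_dist [PseudoMetricSpace X] [CompactSpace X] (x : X) :
    ∃ y, diam (univ : Set X) ≤ 2 * dist x y := by
  obtain ⟨y, -, hy⟩ :=
    isCompact_univ.exists_isMaxOn ⟨x, mem_univ x⟩ (continuous_const.dist continuous_id).continuousOn
  refine ⟨y, diam_le_of_forall_dist_le (by positivity) fun a _ b _ => ?_⟩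
  have ha : dist x a ≤ dist x y := hy (mem_univ a)
  have hb : dist x b ≤ dist x y := hy (mem_univ b)
  linarith [dist_triangle_left a b x]

variable [MetricSpace X] [MeasurableSpace X] [BorelSpace X]

lemma ofReal_le_hausdorffMeasure_ball [ConnectedSpace X] {x y : X} {r : ℝ} (hr : r ≤ dist x y) :
    ENNReal.ofReal r ≤ μH[1] (ball x r) := by
  have hrange : Icc 0 (dist x y) ⊆ range (dist x) :=
    (isPreconnected_range (continuous_const.dist continuous_id)).Icc_subset
      ⟨x, dist_self x⟩ ⟨y, rfl⟩
  have hsub : Ico 0 r ⊆ dist x '' ball x r := by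
    rintro t ⟨ht0, htr⟩
    obtain ⟨z, rfl⟩ := hrange ⟨ht0, htr.le.trans hr⟩
    exact ⟨z, by rwa [mem_ball, dist_comm], rfl⟩
  calc ENNReal.ofReal r = μH[1] (Ico 0 r) := by
        rw [hausdorffMeasure_real, Real.volume_Ico, sub_zero]
    _ ≤ μH[1] (dist x '' ball x r) := measure_mono hsub
    _ ≤ 1 ^ (1 : ℝ) * μH[1] (ball x r) :=
        (LipschitzWith.dist_right x).hausdorffMeasure_image_le zero_le_one _
    _ = μH[1] (ball x r) := by simp

lemma card_mul_ofReal_le_two_mul_hausdorffMeasure_univ [CompactSpace X] [ConnectedSpace X]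
    {s : Finset X} {δ : ℝ} (hδ : δ ≤ diam (univ : Set X))
    (hs : (s : Set X).Pairwise fun a b => δ ≤ dist a b) :
    s.card * ENNReal.ofReal δ ≤ 2 * μH[1] (univ : Set X) := by
  have hdisj : (s : Set X).PairwiseDisjoint fun x => ball x (δ / 2) := fun a ha b hb hab =>
    ball_disjoint_ball (by linarith [hs ha hb hab])
  have hball (x : X) : ENNReal.ofReal (δ / 2) ≤ μH[1] (ball x (δ / 2)) := by
    obtain ⟨y, hy⟩ := exists_diam_univ_le_two_mul_dist x
    exact ofReal_le_hausdorffMeasure_ball (y := y) (by linarith)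
  calc s.card * ENNReal.ofReal δ = 2 * ∑ _x ∈ s, ENNReal.ofReal (δ / 2) := by
        rw [Finset.sum_const, nsmul_eq_mul, mul_left_comm, ← ENNReal.ofReal_ofNat 2,
          ← ENNReal.ofReal_mul zero_le_two, mul_div_cancel₀ _ two_ne_zero]
    _ ≤ 2 * ∑ x ∈ s, μH[1] (ball x (δ / 2)) := by gcongr with x; exact hball x
    _ = 2 * μH[1] (⋃ x ∈ s, ball x (δ / 2)) := by
        rw [measure_biUnion_finset hdisj fun x _ => measurableSet_ball]
    _ ≤ 2 * μH[1] (univ : Set X) := by gcongr; exact subset_univ _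

end Packing

section Lipschitz

open Dynamics

variable {X : Type*} [PseudoMetricSpace X] {f : X → X} {L : ℝ≥0} {ε : ℝ} {n : ℕ}

lemma LipschitzWith.mem_dynEntourage (hf : LipschitzWith L f) (hL : 1 ≤ L) {x y : X}
    (hxy : dist x y < ε / L ^ n) :
    (x, y) ∈ dynEntourage f {p : X × X | dist p.1 p.2 < ε} n := by
  refine Dynamics.mem_dynEntourage.2 fun k hk => ?_
  have hLk : (L : ℝ) ^ k ≤ L ^ n := pow_le_pow_right₀ (by exact_mod_cast hL) hk.le
  have hLn : (0 : ℝ) < L ^ n := by positivity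
  calc dist (f^[k] x) (f^[k] y) ≤ L ^ k * dist x y := by
        simpa using (hf.iterate k).dist_le_mul x y
    _ ≤ L ^ n * dist x y := by gcongr
    _ < ε := by rwa [lt_div_iff₀' hLn] at hxy

lemma LipschitzWith.pairwise_le_dist_of_isDynNetIn (hf : LipschitzWith L f) (hL : 1 ≤ L)
    (hε : 0 < ε) {F s : Set X} (hs : IsDynNetIn f F {p : X × X | dist p.1 p.2 < ε} n s) :
    s.Pairwise fun x y => ε / L ^ n ≤ dist x y := by
  intro x hx y hy hxy
  by_contra! hclose
  have hself : dist y y < ε / L ^ n := by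
    rw [dist_self]
    exact div_pos hε (pow_pos (zero_lt_one.trans_le (by exact_mod_cast hL)) n)
  exact disjoint_left.1 (hs.2 hx hy hxy) (hf.mem_dynEntourage hL hclose)
    (hf.mem_dynEntourage hL hself)

end Lipschitz

section Entropy

open Dynamics ExpGrowth

variable {X : Type*} [MetricSpace X] [MeasurableSpace X] [BorelSpace X] [CompactSpace X]
  [ConnectedSpace X] {f : X → X} {L : ℝ≥0} {ε : ℝ}

lemma LipschitzWith.netMaxcard_le (hf : LipschitzWith L f) (hL : 1 ≤ L) (hε : 0 < ε)
    (hεD : ε ≤ diam (univ : Set X)) (F : Set X) (n : ℕ) :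
    (netMaxcard f F {p : X × X | dist p.1 p.2 < ε} n : ℝ≥0∞)
      ≤ 2 * μH[1] (univ : Set X) / ENNReal.ofReal ε * (L : ℝ≥0∞) ^ n := by
  have hLn : (0 : ℝ) < L ^ n := pow_pos (zero_lt_one.trans_le (by exact_mod_cast hL)) n
  simp only [netMaxcard, ENat.toENNReal_iSup, ENat.toENNReal_coe]
  refine iSup₂_le fun s hs => ?_
  have hpack := card_mul_ofReal_le_two_mul_hausdorffMeasure_univ
    ((div_le_self hε.le (one_le_pow₀ (by exact_mod_cast hL))).trans hεD)
    (hf.pairwise_le_dist_of_isDynNetIn hL hε hs)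
  rw [ENNReal.ofReal_div_of_pos hLn, ENNReal.ofReal_pow L.coe_nonneg,
    ENNReal.ofReal_coe_nnreal] at hpack
  have hLn₀ : (L : ℝ≥0∞) ^ n ≠ 0 := pow_ne_zero _ (by simpa using (zero_lt_one.trans_le hL).ne')
  have hLn_top : (L : ℝ≥0∞) ^ n ≠ ⊤ := ENNReal.pow_ne_top ENNReal.coe_ne_top
  rw [div_eq_mul_inv, mul_right_comm, ← div_eq_mul_inv,
    ENNReal.le_div_iff_mul_le (.inl (ENNReal.ofReal_pos.2 hε).ne') (.inl ENNReal.ofReal_ne_top)]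
  calc (s.card : ℝ≥0∞) * ENNReal.ofReal ε = s.card * (ENNReal.ofReal ε / L ^ n) * L ^ n := by
        rw [mul_assoc, ENNReal.div_mul_cancel hLn₀ hLn_top]
    _ ≤ 2 * μH[1] (univ : Set X) * L ^ n := by gcongr

lemma LipschitzWith.netEntropyEntourage_le_log (hf : LipschitzWith L f) (hL : 1 ≤ L)
    (hfin : μH[1] (univ : Set X) < ⊤) (hε : 0 < ε) (hεD : ε ≤ diam (univ : Set X)) (F : Set X) :
    netEntropyEntourage f F {p : X × X | dist p.1 p.2 < ε} ≤ Real.log L := by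
  calc netEntropyEntourage f F {p : X × X | dist p.1 p.2 < ε}
      ≤ expGrowthSup fun n => (L : ℝ≥0∞) ^ n :=
        expGrowthSup_le_of_eventually_le
          (ENNReal.div_ne_top (ENNReal.mul_ne_top ENNReal.ofNat_ne_top hfin.ne)
            (ENNReal.ofReal_pos.2 hε).ne')
          (Filter.Eventually.of_forall (hf.netMaxcard_le hL hε hεD F))
    _ = Real.log L := by
        rw [expGrowthSup_pow, ENNReal.log_of_nnreal (zero_lt_one.trans_le hL).ne']

end Entropy

theorem entropy_le_log_lipschitz_general {X : Type*} [MetricSpace X] [MeasurableSpace X]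
    [BorelSpace X] [CompactSpace X] [ConnectedSpace X] [Nontrivial X]
    (hfin : μH[1] (Set.univ : Set X) < ⊤)
    (f : X → X) (L : ℝ≥0) (hL : 1 ≤ L) (hf : LipschitzWith L f) :
    Dynamics.coverEntropy f Set.univ ≤ (Real.log L : EReal) := by
  obtain ⟨x, y, hxy⟩ := exists_pair_ne X
  have hD : 0 < diam (univ : Set X) :=
    (dist_pos.2 hxy).trans_le (dist_le_diam_of_mem isCompact_univ.isBounded trivial trivial)
  rw [Dynamics.coverEntropy_eq_iSup_basis_netEntropyEntourage (uniformity_basis_dist_lt hD)]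
  exact iSup₂_le fun ε hε => hf.netEntropyEntourage_le_log hL hfin hε.1 hε.2.le _

/-- On a nondegenerate compact connected metric space of finite length (in which
every connected subset has Hausdorff 1-measure at least its diameter), a
Lipschitz map with constant L ≥ 1 has topological entropy at most log L. -/
theorem entropy_le_log_lipschitz {X : Type*} [MetricSpace X] [MeasurableSpace X]
    [BorelSpace X] [CompactSpace X] [ConnectedSpace X] [Nontrivial X]
    (hfin : μH[1] (Set.univ : Set X) < ⊤)
    (hlen : ∀ C : Set X, IsPreconnected C → EMetric.diam C ≤ μH[1] C)
    (f : X → X) (L : ℝ≥0) (hL : 1 ≤ L) (hf : LipschitzWith L f) :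
    Dynamics.coverEntropy f Set.univ ≤ (Real.log L : EReal) :=
  entropy_le_log_lipschitz_general hfin f L hL hf
end

section
/- Let f : X → X be a continuous surjection of a compact metric space such that there exist a finite closed cover 𝒜 of X, a relation → on 𝒜 (A → B iff f(A) ⊇ B combined with f(A) meeting int B), and a dense family 𝒟 of nonempty closed subsets of X with: (i) A → B implies f(A) ⊇ B; (ii) for every D ∈ 𝒟 there are n ∈ ℕ and A ∈ 𝒜 with f^n(D) ⊇ A; (iii) the directed graph (𝒜, →) is strongly connected and the gcd of lengths of its cycles is 1 (primitive); (iv) ⋃_{A∈𝒜} int(A) is dense in X. Then f is topologically exact: for every nonempty open U ⊆ X there is n with f^n(U) = X. -/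
/-!
If the transition graph is primitive, there is a single length `p` such that any two members
`A i`, `A j` of the cover are joined by a path of length exactly `p`; pushing covers forward
along the path gives `A j ⊆ f^[p] '' A i`. A nonempty open `U` contains some `D ∈ 𝒟` with
`A i ⊆ f^[n] '' D`, so `f^[p + n] '' U` contains every `A j`, i.e. all of `X`.

The uniform length comes from the loops at a vertex: their lengths form an additive submonoid
of `ℕ` whose gcd is `1` by strong connectivity and primitivity, so it contains every large
integer (the Frobenius number exists).
-/

open Set

/-- There is a path of length `n` from `i` to `j` in the directed graph given by
the relation `arrow`. -/
def IsPathOfLen {m : ℕ} (arrow : Fin m → Fin m → Prop) (n : ℕ) (i j : Fin m) : Prop :=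
  ∃ σ : ℕ → Fin m, σ 0 = i ∧ σ n = j ∧ ∀ l < n, arrow (σ l) (σ (l + 1))

open Filter

namespace IsPathOfLen

variable {m : ℕ} {arrow : Fin m → Fin m → Prop}

theorem zero (i : Fin m) : IsPathOfLen arrow 0 i i :=
  ⟨fun _ => i, rfl, rfl, fun _ h => absurd h (Nat.not_lt_zero _)⟩

theorem append {n k : ℕ} {i j l : Fin m} (h₁ : IsPathOfLen arrow n i j)
    (h₂ : IsPathOfLen arrow k j l) : IsPathOfLen arrow (n + k) i l := by
  obtain ⟨σ₁, hσ₁0, hσ₁n, hσ₁⟩ := h₁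
  obtain ⟨σ₂, hσ₂0, hσ₂k, hσ₂⟩ := h₂
  set σ : ℕ → Fin m := fun t => if t ≤ n then σ₁ t else σ₂ (t - n)
  have hleft : ∀ t ≤ n, σ t = σ₁ t := fun t ht => if_pos ht
  have hright : ∀ t ≥ n, σ t = σ₂ (t - n) := by
    intro t ht
    rcases ht.eq_or_lt with rfl | ht
    · rw [hleft n le_rfl, hσ₁n, Nat.sub_self, hσ₂0]
    · exact if_neg (Nat.not_le.2 ht)
  refine ⟨σ, by rw [hleft 0 (Nat.zero_le n), hσ₁0], ?_, fun t ht => ?_⟩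
  · rw [hright _ (Nat.le_add_right n k), Nat.add_sub_cancel_left, hσ₂k]
  · rcases Nat.lt_or_ge t n with htn | htn
    · rw [hleft t htn.le, hleft (t + 1) htn]
      exact hσ₁ t htn
    · rw [hright t htn, hright (t + 1) (by omega), show t + 1 - n = t - n + 1 by omega]
      exact hσ₂ (t - n) (by omega)

theorem subset_image_iterate {X : Type*} {f : X → X} {A : Fin m → Set X}
    (hcov : ∀ i j, arrow i j → A j ⊆ f '' A i) :
    ∀ {n : ℕ} {i j : Fin m}, IsPathOfLen arrow n i j → A j ⊆ f^[n] '' A i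
  | 0, i, j, ⟨σ, hσ0, hσn, _⟩ => by rw [← hσ0, ← hσn, Function.iterate_zero, image_id]
  | n + 1, i, j, ⟨σ, hσ0, hσn, hσ⟩ => by
    have hinit : IsPathOfLen arrow n i (σ n) := ⟨σ, hσ0, rfl, fun l hl => hσ l (by omega)⟩
    calc A j ⊆ f '' A (σ n) := hcov _ _ (hσn ▸ hσ n n.lt_succ_self)
      _ ⊆ f '' (f^[n] '' A i) := image_mono (subset_image_iterate hcov hinit)
      _ = f^[n + 1] '' A i := by rw [Function.iterate_succ', image_comp]

end IsPathOfLen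

section LoopLengths

variable {m : ℕ} {arrow : Fin m → Fin m → Prop}

def loopLengths (arrow : Fin m → Fin m → Prop) (i : Fin m) : AddSubmonoid ℕ where
  carrier := {n | IsPathOfLen arrow n i i}
  add_mem' := IsPathOfLen.append
  zero_mem' := IsPathOfLen.zero i

theorem setGcd_loopLengths_eq_one (hstrong : ∀ i j, ∃ n, IsPathOfLen arrow n i j)
    (hprim : ∀ d : ℕ, (∀ n : ℕ, 1 ≤ n → (∃ i : Fin m, IsPathOfLen arrow n i i) → d ∣ n)
      → d = 1) (i : Fin m) :
    Nat.setGcd (loopLengths arrow i : Set ℕ) = 1 := by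
  refine hprim _ fun n _ ⟨j, hcycle⟩ => ?_
  obtain ⟨a, hto⟩ := hstrong i j
  obtain ⟨b, hfrom⟩ := hstrong j i
  -- Going around the cycle at `j` or not gives two loops at `i` whose lengths differ by `n`.
  have hshort : Nat.setGcd (loopLengths arrow i : Set ℕ) ∣ a + b :=
    Nat.setGcd_dvd_of_mem (hto.append hfrom)
  have hlong : Nat.setGcd (loopLengths arrow i : Set ℕ) ∣ a + n + b :=
    Nat.setGcd_dvd_of_mem ((hto.append hcycle).append hfrom)
  rw [add_right_comm] at hlong
  exact (Nat.dvd_add_right hshort).mp hlong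

theorem eventually_forall_isPathOfLen (hstrong : ∀ i j, ∃ n, IsPathOfLen arrow n i j)
    (hprim : ∀ d : ℕ, (∀ n : ℕ, 1 ≤ n → (∃ i : Fin m, IsPathOfLen arrow n i i) → d ∣ n)
      → d = 1) :
    ∀ᶠ n in atTop, ∀ i j, IsPathOfLen arrow n i j := by
  refine eventually_all.2 fun i => eventually_all.2 fun j => ?_
  obtain ⟨N, hN⟩ := Nat.exists_mem_closure_of_ge (loopLengths arrow i : Set ℕ)
  obtain ⟨b, hto⟩ := hstrong i j
  refine eventually_atTop.2 ⟨N + b, fun n hn => ?_⟩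
  have hloop : n - b ∈ loopLengths arrow i := by
    simpa only [AddSubmonoid.closure_eq] using
      hN (n - b) (by omega) (setGcd_loopLengths_eq_one hstrong hprim i ▸ one_dvd _)
  simpa only [Nat.sub_add_cancel (show b ≤ n by omega)] using IsPathOfLen.append hloop hto

end LoopLengths

theorem exactness_criterion_general {X : Type*} [MetricSpace X]
    (f : X → X)
    (m : ℕ) (A : Fin m → Set X)
    (hcover : (⋃ i, A i) = univ)
    (arrow : Fin m → Fin m → Prop)
    (hcov : ∀ i j, arrow i j → A j ⊆ f '' A i)
    (𝒟 : Set (Set X))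
    (hdense : ∀ U : Set X, IsOpen U → U.Nonempty → ∃ D ∈ 𝒟, D ⊆ U)
    (hreach : ∀ D ∈ 𝒟, ∃ (n : ℕ) (i : Fin m), A i ⊆ f^[n] '' D)
    (hstrong : ∀ i j : Fin m, ∃ n : ℕ, 1 ≤ n ∧ IsPathOfLen arrow n i j)
    (hprim : ∀ d : ℕ, (∀ n : ℕ, 1 ≤ n → (∃ i : Fin m, IsPathOfLen arrow n i i) → d ∣ n)
      → d = 1) :
    ∀ U : Set X, IsOpen U → U.Nonempty → ∃ n : ℕ, 1 ≤ n ∧ f^[n] '' U = univ := by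
  intro U hU hUne
  obtain ⟨p, hpath, hp⟩ := ((eventually_forall_isPathOfLen
    (fun i j => (hstrong i j).imp fun _ => And.right) hprim).and (eventually_ge_atTop 1)).exists
  obtain ⟨D, hD𝒟, hDU⟩ := hdense U hU hUne
  obtain ⟨n, i, hAi⟩ := hreach D hD𝒟
  refine ⟨p + n, by omega, eq_univ_of_univ_subset ?_⟩
  rw [← hcover]
  refine iUnion_subset fun j => ?_
  calc A j ⊆ f^[p] '' A i := (hpath i j).subset_image_iterate hcov
    _ ⊆ f^[p] '' (f^[n] '' U) := image_mono (hAi.trans (image_mono hDU))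
    _ = f^[p + n] '' U := by rw [Function.iterate_add, image_comp]

/-- Criterion for topological exactness of a map admitting a primitive Markov-like
transition structure on a finite closed cover. -/
theorem exactness_criterion {X : Type*} [MetricSpace X] [CompactSpace X]
    (f : X → X) (hf : Continuous f) (hsurj : Function.Surjective f)
    (m : ℕ) (A : Fin m → Set X)
    (hclosed : ∀ i, IsClosed (A i)) (hcover : (⋃ i, A i) = univ)
    (arrow : Fin m → Fin m → Prop)
    (harrow : ∀ i j, arrow i j ↔ (f '' A i ∩ interior (A j)).Nonempty)
    (hcov : ∀ i j, arrow i j → A j ⊆ f '' A i)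
    (𝒟 : Set (Set X))
    (h𝒟 : ∀ D ∈ 𝒟, D.Nonempty ∧ IsClosed D)
    (hdense : ∀ U : Set X, IsOpen U → U.Nonempty → ∃ D ∈ 𝒟, D ⊆ U)
    (hreach : ∀ D ∈ 𝒟, ∃ (n : ℕ) (i : Fin m), A i ⊆ f^[n] '' D)
    (hstrong : ∀ i j : Fin m, ∃ n : ℕ, 1 ≤ n ∧ IsPathOfLen arrow n i j)
    (hprim : ∀ d : ℕ, (∀ n : ℕ, 1 ≤ n → (∃ i : Fin m, IsPathOfLen arrow n i i) → d ∣ n)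
      → d = 1)
    (hintdense : Dense (⋃ i, interior (A i))) :
    ∀ U : Set X, IsOpen U → U.Nonempty → ∃ n : ℕ, 1 ≤ n ∧ f^[n] '' U = univ :=
  exactness_criterion_general f m A hcover arrow hcov 𝒟 hdense hreach hstrong hprim
end

section
/- Let k ≥ 2 and consider the directed graph on vertices {X₀, X₁, …, X_k} with edges X_i → X_{(i+1) mod (k+1)} for all i, plus the extra edge X₀ → X₂. For any directed path (A₀,…,A_{n−1}) in this graph, let k_n be the number of indices l with A_l ∈ {X₀, X_k}. Then any two such indices l_j < l_{j+2} (the j-th and (j+2)-th occurrences) satisfy l_{j+2} − l_j ≥ k − 1; consequently limsup_{n→∞} (max over paths of length n of k_n)/n ≤ 2/(k−1). -/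
/-!
Starting from `X₀`, a path climbs the cycle by one vertex per step (two on the chord
`X₀ → X₂`), so it needs at least `k - 1` steps before it can reach `X₀` or `X_k` again; and
`X_k` is always followed by `X₀`. Hence any three visits to `{X₀, X_k}` span at least `k - 1`
steps, so every block of `k - 1` consecutive times contains at most two visits, which gives
at most `2 (n / (k - 1) + 1)` visits in time `n`.
-/

open Filter Finset Topology

theorem Finset.card_le_two_of_forall_lt_not_lt {α : Type*} [LinearOrder α] {t : Finset α}
    (h : ∀ a ∈ t, ∀ b ∈ t, ∀ c ∈ t, a < b → ¬b < c) : #t ≤ 2 := by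
  by_contra! ht
  let e := t.orderEmbOfFin rfl
  exact h (e ⟨0, by omega⟩) (t.orderEmbOfFin_mem rfl _) (e ⟨1, by omega⟩)
    (t.orderEmbOfFin_mem rfl _) (e ⟨2, ht⟩) (t.orderEmbOfFin_mem rfl _)
    (e.strictMono (by simp [Fin.lt_def])) (e.strictMono (by simp [Fin.lt_def]))

theorem Finset.card_mul_le_of_le_sub {s : Finset ℕ} {n d : ℕ} (hs : ∀ l ∈ s, l < n)
    (hspread : ∀ a ∈ s, ∀ b ∈ s, ∀ c ∈ s, a < b → b < c → d ≤ c - a) :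
    #s * d ≤ 2 * (n + d) := by
  rcases Nat.eq_zero_or_pos d with rfl | hd
  · simp
  have hblock : ∀ i ∈ s.image (· / d), #{l ∈ s | l / d = i} ≤ 2 := by
    intro i _
    refine card_le_two_of_forall_lt_not_lt fun a ha b hb c hc hab hbc => ?_
    simp only [mem_filter] at ha hb hc
    have hc_lt : c < a / d * d + d := ha.2 ▸ hc.2 ▸ Nat.lt_div_mul_add hd
    have := Nat.div_mul_le_self a d
    have := hspread a ha.1 b hb.1 c hc.1 hab hbc
    omega
  have himage : #(s.image (· / d)) ≤ n / d + 1 := by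
    calc _ ≤ #(range (n / d + 1)) := card_le_card <| image_subset_iff.2 fun l hl =>
          mem_range.2 (Nat.lt_succ_of_le (Nat.div_le_div_right (hs l hl).le))
      _ = n / d + 1 := card_range _
  calc #s * d ≤ 2 * (n / d + 1) * d := by
        gcongr
        exact (card_le_mul_card_image s 2 hblock).trans (by gcongr)
    _ ≤ 2 * (n + d) := by nlinarith [Nat.div_mul_le_self n d]

theorem limsup_le_of_eventually_le_add_div {f : ℕ → ℝ} {c C : ℝ} (hf0 : 0 ≤ f)
    (hf : ∀ᶠ n : ℕ in atTop, f n ≤ c + C / n) : limsup f atTop ≤ c := by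
  have hlim : Tendsto (fun n : ℕ => c + C / n) atTop (𝓝 c) := by
    simpa using tendsto_const_nhds.add (tendsto_const_div_atTop_nhds_zero_nat C)
  calc limsup f atTop ≤ limsup (fun n : ℕ => c + C / n) atTop :=
        limsup_le_limsup hf (isBoundedUnder_of ⟨0, hf0⟩).isCoboundedUnder_le
          hlim.isBoundedUnder_le
    _ = c := hlim.limsup_eq

def chordedCycleAdj (k : ℕ) (i j : Fin (k + 1)) : Prop :=
  j = i + 1 ∨ (i = 0 ∧ j = 2)

namespace chordedCycleAdj

variable {k : ℕ} {a b : Fin (k + 1)}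

theorem val_eq (hk : 2 ≤ k) (h : chordedCycleAdj k a b) (ha : a ≠ Fin.last k) :
    b.val = a.val + 1 ∨ (a.val = 0 ∧ b.val = 2) := by
  obtain ⟨m, rfl⟩ := Nat.exists_eq_add_of_le' hk
  rcases h with rfl | ⟨rfl, rfl⟩
  · exact .inl (Fin.val_add_one_of_lt (lt_of_le_of_ne (Fin.le_last a) ha))
  · exact .inr ⟨rfl, Fin.val_two⟩

theorem eq_zero_of_last (h : chordedCycleAdj k (Fin.last k) b) : b = 0 := by
  rcases h with rfl | ⟨h0, -⟩
  · exact Fin.last_add_one k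
  · obtain rfl : k = 0 := by simpa [Fin.ext_iff] using h0
    exact Fin.fin_one_eq_zero b

end chordedCycleAdj

section Path

variable {k n : ℕ} {A : ℕ → Fin (k + 1)}

theorem val_mem_Icc_of_eq_zero (hk : 2 ≤ k)
    (hA : ∀ l, l + 1 < n → chordedCycleAdj k (A l) (A (l + 1))) {l : ℕ} (h0 : A l = 0) :
    ∀ j, j + 2 ≤ k → l + j < n → (A (l + j)).val ∈ Set.Icc j (j + 1)
  | 0, _, _ => by simp [h0]
  | j + 1, hj, hn => by
    have ⟨hlo, hhi⟩ := val_mem_Icc_of_eq_zero hk hA h0 j (by omega) (by omega)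
    have hne : A (l + j) ≠ Fin.last k := fun h => by simp [h] at hhi; omega
    have := (hA (l + j) (by omega)).val_eq hk hne
    rw [← add_assoc, Set.mem_Icc]
    omega

theorem le_sub_of_eq_zero (hk : 2 ≤ k)
    (hA : ∀ l, l + 1 < n → chordedCycleAdj k (A l) (A (l + 1))) {l l' : ℕ} (h0 : A l = 0)
    (hl' : A l' = 0 ∨ A l' = Fin.last k) (hll' : l < l') (hl'n : l' < n) : k - 1 ≤ l' - l := by
  by_contra! h
  have hval := val_mem_Icc_of_eq_zero hk hA h0 (l' - l) (by omega) (by omega)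
  rw [Nat.add_sub_cancel' hll'.le, Set.mem_Icc] at hval
  rcases hl' with h' | h' <;> simp [h'] at hval <;> omega

theorem le_sub_of_three_visits (hk : 2 ≤ k)
    (hA : ∀ l, l + 1 < n → chordedCycleAdj k (A l) (A (l + 1))) {l₁ l₂ l₃ : ℕ}
    (h₁₂ : l₁ < l₂) (h₂₃ : l₂ < l₃) (h₃ : l₃ < n)
    (hv₁ : A l₁ = 0 ∨ A l₁ = Fin.last k) (hv₂ : A l₂ = 0 ∨ A l₂ = Fin.last k)
    (hv₃ : A l₃ = 0 ∨ A l₃ = Fin.last k) : k - 1 ≤ l₃ - l₁ := by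
  rcases hv₁ with h₁ | h₁
  · have := le_sub_of_eq_zero hk hA h₁ hv₂ h₁₂ (by omega)
    omega
  have hnext : A (l₁ + 1) = 0 := chordedCycleAdj.eq_zero_of_last (h₁ ▸ hA l₁ (by omega))
  rcases (Nat.succ_le_of_lt h₁₂).lt_or_eq with h | rfl
  · have := le_sub_of_eq_zero hk hA hnext hv₂ h (by omega)
    omega
  · have := le_sub_of_eq_zero hk hA hnext hv₃ h₂₃ h₃
    omega

theorem sSup_card_visits_mul_le (hk : 2 ≤ k) (n : ℕ) :
    sSup {c : ℕ | ∃ A : ℕ → Fin (k + 1),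
        (∀ l, l + 1 < n → chordedCycleAdj k (A l) (A (l + 1))) ∧
        c = #{l ∈ range n | A l = 0 ∨ A l = Fin.last k}} * (k - 1) ≤ 2 * (n + (k - 1)) := by
  refine le_trans (Nat.mul_le_mul_right _ (csSup_le' ?_)) (Nat.div_mul_le_self _ (k - 1))
  rintro _ ⟨A, hA, rfl⟩
  rw [Nat.le_div_iff_mul_le (by omega)]
  refine card_mul_le_of_le_sub (fun l hl => mem_range.1 (mem_filter.1 hl).1) ?_
  simp only [mem_filter, mem_range]
  exact fun a ha b hb c hc hab hbc => le_sub_of_three_visits hk hA hab hbc hc.1 ha.2 hb.2 hc.2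

end Path

/-- In the cyclic graph X₀ → X₁ → ⋯ → X_k → X₀ with extra edge X₀ → X₂, any three
occurrences of vertices from {X₀, X_k} along a path span at least k−1 steps;
consequently the maximal asymptotic frequency of {X₀, X_k} along paths is at most
2/(k−1). -/
theorem frequency_bound_in_cycle_graph (k : ℕ) (hk : 2 ≤ k)
    (arrow : Fin (k + 1) → Fin (k + 1) → Prop)
    (harrow : ∀ i j : Fin (k + 1), arrow i j ↔ (j = i + 1 ∨ (i = 0 ∧ j = 2))) :
    (∀ (n : ℕ) (A : ℕ → Fin (k + 1)),
      (∀ l, l + 1 < n → arrow (A l) (A (l + 1))) →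
      ∀ l1 l2 l3 : ℕ, l1 < l2 → l2 < l3 → l3 < n →
        (A l1 = 0 ∨ A l1 = Fin.last k) →
        (A l2 = 0 ∨ A l2 = Fin.last k) →
        (A l3 = 0 ∨ A l3 = Fin.last k) →
        k - 1 ≤ l3 - l1) ∧
    Filter.limsup (fun n : ℕ =>
      ((sSup {c : ℕ | ∃ A : ℕ → Fin (k + 1),
          (∀ l, l + 1 < n → arrow (A l) (A (l + 1))) ∧
          c = ((Finset.range n).filter
                (fun l => A l = 0 ∨ A l = Fin.last k)).card} : ℕ) : ℝ) / n)
      Filter.atTop ≤ 2 / ((k : ℝ) - 1) := by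
  obtain rfl : arrow = chordedCycleAdj k := funext₂ fun i j => propext (harrow i j)
  refine ⟨fun n A hA l₁ l₂ l₃ => le_sub_of_three_visits hk hA, ?_⟩
  refine limsup_le_of_eventually_le_add_div (C := 2) (fun n => by positivity) ?_
  filter_upwards [eventually_gt_atTop 0] with n hn
  have hcount := sSup_card_visits_mul_le hk n
  generalize (sSup _ : ℕ) = S at hcount ⊢
  have hcountℝ := (Nat.cast_le (α := ℝ)).2 hcount
  push_cast [Nat.cast_sub (by omega : 1 ≤ k)] at hcountℝ
  have hk₁ : (0 : ℝ) < k - 1 := by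
    have : (2 : ℝ) ≤ k := by exact_mod_cast hk
    linarith
  have hn₀ : (0 : ℝ) < n := by exact_mod_cast hn
  rw [div_add_div _ _ hk₁.ne' hn₀.ne', div_le_div_iff₀ hn₀ (by positivity)]
  nlinarith
end
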